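/- Let N be a positive integer, define φ(j,1) = (j/N²)(1 + j − N + 2N(H_{N−1} − H_{j−1})) where H_n = Σ_{m=1}^{n} 1/m (H_0 = 0), and let H_n^{(2)} = Σ_{m=1}^{n} 1/m². Then for all integers k, s with 1 ≤ k ≤ s ≤ N: Σ_{j=k+1}^{s} [ k/(j(j−1)) ] φ(j,1) + (2k/N²)( s − N + N(H_{N−1} − H_{s−1}) ) = (k/N²) [ (s−k) + (2−N)(H_{s−1} − H_{k−1}) + 2N H_{N−1}(H_{s−1} − H_{k−1}) − N( H_{s−1}² + H_{s−1}^{(2)} − H_{k−1}² − H_{k−1}^{(2)} ) + 2(s−N) + 2N(H_{N−1} − H_{s−1}) ]. -/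
import Mathlib


/-- The `n`-th harmonic number `H_n = Σ_{j=1}^{n} 1/j` (with `H_0 = 0`), as a real number. -/
noncomputable def harm (n : ℕ) : ℝ := ∑ j ∈ Finset.Icc 1 n, (1 : ℝ) / j

/-- The `n`-th generalized harmonic number `H_n^{(2)} = Σ_{m=1}^{n} 1/m²`. -/
noncomputable def harm2 (n : ℕ) : ℝ := ∑ m ∈ Finset.Icc 1 n, (1 : ℝ) / (m : ℝ) ^ 2

lemma harm_succ (n : ℕ) : harm (n + 1) = harm n + 1 / (n + 1 : ℝ) := by
  simp [harm, Finset.sum_Icc_succ_top (Nat.one_le_iff_ne_zero.mpr (Nat.succ_ne_zero n))]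

lemma harm2_succ (n : ℕ) : harm2 (n + 1) = harm2 n + 1 / ((n + 1 : ℝ)) ^ 2 := by
  simp [harm2, Finset.sum_Icc_succ_top (Nat.one_le_iff_ne_zero.mpr (Nat.succ_ne_zero n))]

set_option maxHeartbeats 4000000 in
/-- Value of the two-threshold rule in the duration problem, in closed form via
harmonic and generalized harmonic numbers. -/
theorem two_threshold_value (N k s : ℕ) (hk : 1 ≤ k) (hks : k ≤ s) (hsN : s ≤ N) :
    (∑ j ∈ Finset.Icc (k + 1) s,
        ((k : ℝ) / ((j : ℝ) * ((j : ℝ) - 1))) *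
          (((j : ℝ) / (N : ℝ) ^ 2) *
            (1 + (j : ℝ) - N + 2 * (N : ℝ) * (harm (N - 1) - harm (j - 1))))) +
      (2 * (k : ℝ) / (N : ℝ) ^ 2) *
        ((s : ℝ) - N + (N : ℝ) * (harm (N - 1) - harm (s - 1)))
    = ((k : ℝ) / (N : ℝ) ^ 2) *
        (((s : ℝ) - k) + (2 - (N : ℝ)) * (harm (s - 1) - harm (k - 1)) +
          2 * (N : ℝ) * harm (N - 1) * (harm (s - 1) - harm (k - 1)) -
          (N : ℝ) * (harm (s - 1) ^ 2 + harm2 (s - 1) - harm (k - 1) ^ 2 - harm2 (k - 1)) +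
          2 * ((s : ℝ) - N) + 2 * (N : ℝ) * (harm (N - 1) - harm (s - 1))) := by
  induction s, hks using Nat.le_induction with
  | base =>
    rw [Finset.Icc_eq_empty (by omega), Finset.sum_empty]
    ring
  | succ s hks ih =>
    have hsN' : s ≤ N := by omega
    have ih' := ih hsN'
    have hs1 : 1 ≤ s := le_trans hk hks
    obtain ⟨t, rfl⟩ := Nat.exists_eq_add_of_le hs1
    have hNe : (N : ℝ) ≠ 0 := Nat.cast_ne_zero.mpr (by omega)
    rw [Finset.sum_Icc_succ_top (by omega : k + 1 ≤ 1 + t + 1)]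
    simp only [show 1 + t + 1 - 1 = t + 1 by omega, show 1 + t - 1 = t by omega,
      show 1 + t + 1 = t + 2 by omega, show t + 2 - 1 = t + 1 by omega] at ih' ⊢
    rw [eq_sub_of_add_eq ih', harm_succ t, harm2_succ t]
    have h1 : ((t : ℝ) + 1) ≠ 0 := by positivity
    have h2 : ((t : ℝ) + 2) ≠ 0 := by positivity
    push_cast
    have h3 : (t : ℝ) + 2 - 1 ≠ 0 := by intro h; apply h1; linarith
    field_simp
    ring
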